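/- Let T = [[A, 0], [0, D]] be a block-diagonal operator on H₁ ⊕ H₂ and r ≥ 1. Then w(T)^r ≤ (1/2) max{ ‖ |A|^r + |A*|^r ‖, ‖ |D|^r + |D*|^r ‖ }. -/

import Mathlib

noncomputable section
open ContinuousLinearMap

/-- The numerical radius of a bounded operator on a complex Hilbert space. -/
def numRadius {H : Type*} [NormedAddCommGroup H] [InnerProductSpace ℂ H]
    (T : H →L[ℂ] H) : ℝ :=
  sSup {r | ∃ x : H, ‖x‖ = 1 ∧ r = ‖(inner ℂ (T x) x : ℂ)‖}

/-- The block operator `[[A, B], [C, D]]` on the Hilbert space direct sum `H₁ ⊕ H₂`. -/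
def blockOp {H₁ H₂ : Type*} [NormedAddCommGroup H₁] [InnerProductSpace ℂ H₁]
    [NormedAddCommGroup H₂] [InnerProductSpace ℂ H₂]
    (A : H₁ →L[ℂ] H₁) (B : H₂ →L[ℂ] H₁) (C : H₁ →L[ℂ] H₂) (D : H₂ →L[ℂ] H₂) :
    WithLp 2 (H₁ × H₂) →L[ℂ] WithLp 2 (H₁ × H₂) :=
  (((WithLp.prodContinuousLinearEquiv 2 ℂ H₁ H₂).symm :
      (H₁ × H₂) →L[ℂ] WithLp 2 (H₁ × H₂))).comp
    (((A.comp (fst ℂ H₁ H₂) + B.comp (snd ℂ H₁ H₂)).prod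
        (C.comp (fst ℂ H₁ H₂) + D.comp (snd ℂ H₁ H₂))).comp
      ((WithLp.prodContinuousLinearEquiv 2 ℂ H₁ H₂ :
        WithLp 2 (H₁ × H₂) →L[ℂ] (H₁ × H₂))))

/-- The absolute value `|B| = (B*B)^{1/2}` of an operator between Hilbert spaces. -/
def absOp {E F : Type*} [NormedAddCommGroup E] [InnerProductSpace ℂ E] [CompleteSpace E]
    [NormedAddCommGroup F] [InnerProductSpace ℂ F] [CompleteSpace F]
    (B : E →L[ℂ] F) : E →L[ℂ] E :=
  CFC.sqrt ((ContinuousLinearMap.adjoint B).comp B)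

variable {H₁ H₂ : Type*} [NormedAddCommGroup H₁] [InnerProductSpace ℂ H₁] [CompleteSpace H₁]
  [NormedAddCommGroup H₂] [InnerProductSpace ℂ H₂] [CompleteSpace H₂]

/-!
Since `⟪T x, x⟫ = ⟪A x₁, x₁⟫ + ⟪D x₂, x₂⟫` and `‖x₁‖² + ‖x₂‖² = ‖x‖²`, `w(T) ≤ max (w(A), w(D))`,
so it suffices to bound `|⟪A x, x⟫| ^ r` for a unit vector `x`. Kato's mixed Schwarz inequality
`|⟪A x, x⟫|² ≤ ⟪|A| x, x⟫ ⟪|A*| x, x⟫` and AM–GM give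
`|⟪A x, x⟫| ≤ (⟪|A| x, x⟫ + ⟪|A*| x, x⟫) / 2`. Convexity of `t ^ r` and McCarthy's inequality
`⟪B x, x⟫ ^ r ≤ ⟪B ^ r x, x⟫` for `B ≥ 0` then bound the `r`-th power of the right-hand side by
`⟪(|A| ^ r + |A*| ^ r) x, x⟫ / 2`.
-/

open Polynomial Filter Topology
open scoped InnerProductSpace

theorem SemiconjBy.aeval {A : Type*} [CStarAlgebra A] {a b x : A} (h : SemiconjBy x a b)
    (p : ℝ[X]) : SemiconjBy x (aeval a p) (aeval b p) := by
  induction p using Polynomial.induction_on' with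
  | add p q hp hq => simpa only [map_add] using hp.add_right hq
  | monomial n c =>
    simpa only [aeval_monomial, Algebra.algebraMap_eq_smul_one, smul_one_mul]
      using (h.pow_right n).smul_right c

/-- Weierstrass approximation on an interval containing both spectra reduces this to
`SemiconjBy.aeval`. -/
theorem SemiconjBy.cfc_of_continuous {A : Type*} [CStarAlgebra A] {a b x : A}
    (h : SemiconjBy x a b) (ha : IsSelfAdjoint a) (hb : IsSelfAdjoint b) {f : ℝ → ℝ}
    (hf : Continuous f) : SemiconjBy x (cfc f a) (cfc f b) := by
  obtain ⟨M, hM⟩ := ((spectrum.isCompact (𝕜 := ℝ) a).union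
    (spectrum.isCompact (𝕜 := ℝ) b)).isBounded.subset_closedBall 0
  rw [Real.closedBall_eq_Icc, zero_sub, zero_add] at hM
  have hp (n : ℕ) : ∃ p : ℝ[X], ∀ t ∈ Set.Icc (-M) M, |p.eval t - f t| < 1 / (n + 1) :=
    exists_polynomial_near_of_continuousOn _ _ f hf.continuousOn _ Nat.one_div_pos_of_nat
  choose p hp using hp
  have hunif : TendstoUniformlyOn (fun n t => (p n).eval t) f atTop (Set.Icc (-M) M) := by
    rw [Metric.tendstoUniformlyOn_iff]
    intro ε hε
    obtain ⟨N, hN⟩ := exists_nat_one_div_lt hε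
    filter_upwards [eventually_ge_atTop N] with n hn t ht
    rw [Real.dist_eq, abs_sub_comm]
    refine (hp n t ht).trans (hN.trans_le' ?_)
    gcongr
  have hlim {c : A} (hc : IsSelfAdjoint c) (hcM : spectrum ℝ c ⊆ Set.Icc (-M) M) :
      Tendsto (fun n => Polynomial.aeval c (p n)) atTop (𝓝 (cfc f c)) := by
    simp_rw [← cfc_polynomial _ c hc]
    exact tendsto_cfc_fun (hunif.mono hcM) (.of_forall fun n => by fun_prop)
  exact tendsto_nhds_unique
    ((hlim ha (Set.subset_union_left.trans hM)).const_mul x |>.congr fun n => (h.aeval (p n)).eq)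
    ((hlim hb (Set.subset_union_right.trans hM)).mul_const x)

namespace ContinuousLinearMap

section InnerProductSpace

variable {H : Type*} [NormedAddCommGroup H] [InnerProductSpace ℂ H]

lemma norm_inner_apply_self_le_opNorm (T : H →L[ℂ] H) {x : H} (hx : ‖x‖ = 1) :
    ‖⟪T x, x⟫_ℂ‖ ≤ ‖T‖ :=
  calc ‖⟪T x, x⟫_ℂ‖ ≤ ‖T x‖ * ‖x‖ := norm_inner_le_norm _ _
    _ ≤ ‖T‖ := by simpa [hx] using T.le_opNorm x

lemma reApplyInnerSelf_nonneg {T : H →L[ℂ] H} (hT : 0 ≤ T) (x : H) :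
    0 ≤ T.reApplyInnerSelf x :=
  ((nonneg_iff_isPositive T).mp hT).re_inner_nonneg_left x

lemma reApplyInnerSelf_mono {S T : H →L[ℂ] H} (h : S ≤ T) (x : H) :
    S.reApplyInnerSelf x ≤ T.reApplyInnerSelf x := by
  have := ((le_def S T).mp h).re_inner_nonneg_left x
  rwa [sub_apply, inner_sub_left, map_sub, sub_nonneg] at this

lemma reApplyInnerSelf_add (S T : H →L[ℂ] H) (x : H) :
    (S + T).reApplyInnerSelf x = S.reApplyInnerSelf x + T.reApplyInnerSelf x := by
  simp only [reApplyInnerSelf_apply, add_apply, inner_add_left, map_add]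

lemma real_smul_reApplyInnerSelf (c : ℝ) (T : H →L[ℂ] H) (x : H) :
    (c • T).reApplyInnerSelf x = c * T.reApplyInnerSelf x := by
  simp only [reApplyInnerSelf_apply, smul_apply, RCLike.real_smul_eq_coe_smul (K := ℂ),
    inner_smul_left, RCLike.conj_ofReal, RCLike.re_ofReal_mul]

lemma reApplyInnerSelf_algebraMap (c : ℝ) (x : H) :
    (algebraMap ℝ (H →L[ℂ] H) c).reApplyInnerSelf x = c * ‖x‖ ^ 2 := by
  rw [Algebra.algebraMap_eq_smul_one, real_smul_reApplyInnerSelf, reApplyInnerSelf_apply,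
    one_apply_eq_self, inner_self_eq_norm_sq]

end InnerProductSpace

variable {H : Type*} [NormedAddCommGroup H] [InnerProductSpace ℂ H] [CompleteSpace H]

/-- Cauchy–Schwarz for `√C u` and `√C v`. -/
lemma norm_inner_apply_sq_le_of_nonneg {C : H →L[ℂ] H} (hC : 0 ≤ C) (u v : H) :
    ‖⟪C u, v⟫_ℂ‖ ^ 2 ≤ C.reApplyInnerSelf u * C.reApplyInnerSelf v := by
  have hs : adjoint (CFC.sqrt C) = CFC.sqrt C := (CFC.sqrt_nonneg C).isSelfAdjoint.adjoint_eq
  have hinner (w z : H) : ⟪C w, z⟫_ℂ = ⟪CFC.sqrt C w, CFC.sqrt C z⟫_ℂ :=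
    calc ⟪C w, z⟫_ℂ = ⟪CFC.sqrt C (CFC.sqrt C w), z⟫_ℂ := by
          rw [← mul_apply_eq_comp, CFC.sqrt_mul_sqrt_self C hC]
      _ = ⟪CFC.sqrt C w, CFC.sqrt C z⟫_ℂ := by rw [← adjoint_inner_right, hs]
  have hnorm (w : H) : C.reApplyInnerSelf w = ‖CFC.sqrt C w‖ ^ 2 := by
    rw [reApplyInnerSelf_apply, hinner, inner_self_eq_norm_sq]
  rw [hinner, hnorm, hnorm, ← mul_pow]
  gcongr
  exact norm_inner_le_norm _ _

lemma add_mul_reApplyInnerSelf_le_cfc {B : H →L[ℂ] H} (hB : IsSelfAdjoint B) {f : ℝ → ℝ}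
    (hf : ContinuousOn f (spectrum ℝ B)) {c d : ℝ} (h : ∀ t ∈ spectrum ℝ B, c + d * t ≤ f t)
    (x : H) : c * ‖x‖ ^ 2 + d * B.reApplyInnerSelf x ≤ (cfc f B).reApplyInnerSelf x := by
  have := reApplyInnerSelf_mono (cfc_mono h (by fun_prop) hf) x
  rwa [cfc_const_add _ _ _ (by fun_prop) hB, cfc_const_mul _ _ _ (by fun_prop),
    cfc_id' ℝ B hB, reApplyInnerSelf_add, reApplyInnerSelf_algebraMap,
    real_smul_reApplyInnerSelf] at this

end ContinuousLinearMap

lemma Real.exists_rpow_add_mul_sub_le_rpow {r s : ℝ} (hr : 1 ≤ r) (hs : 0 ≤ s) :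
    ∃ d : ℝ, ∀ t, 0 ≤ t → s ^ r + d * (t - s) ≤ t ^ r := by
  rcases hs.eq_or_lt with rfl | hs
  · exact ⟨0, fun t ht => by
      simpa [Real.zero_rpow (by linarith : r ≠ 0)] using Real.rpow_nonneg ht r⟩
  refine ⟨r * s ^ (r - 1), fun t ht => ?_⟩
  have hbern := one_add_mul_self_le_rpow_one_add
    (by linarith [div_nonneg ht hs.le] : (-1 : ℝ) ≤ t / s - 1) hr
  rw [add_sub_cancel, Real.div_rpow ht hs.le, le_div_iff₀ (by positivity)] at hbern
  calc s ^ r + r * s ^ (r - 1) * (t - s) = (1 + r * (t / s - 1)) * s ^ r := by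
        rw [Real.rpow_sub_one hs.ne']
        field_simp
    _ ≤ t ^ r := hbern

variable {H : Type*} [NormedAddCommGroup H] [InnerProductSpace ℂ H] [CompleteSpace H]

/-- McCarthy's inequality, from a supporting line of `t ↦ t ^ r` at `⟪B x, x⟫`. -/
lemma rpow_reApplyInnerSelf_le {B : H →L[ℂ] H} (hB : 0 ≤ B) {r : ℝ} (hr : 1 ≤ r) {x : H}
    (hx : ‖x‖ = 1) :
    B.reApplyInnerSelf x ^ r ≤ (cfc (fun t : ℝ => t ^ r) B).reApplyInnerSelf x := by
  obtain ⟨d, hd⟩ := Real.exists_rpow_add_mul_sub_le_rpow hr (reApplyInnerSelf_nonneg hB x)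
  have := add_mul_reApplyInnerSelf_le_cfc hB.isSelfAdjoint (f := fun t : ℝ => t ^ r)
    (Real.continuous_rpow_const (by linarith : (0 : ℝ) ≤ r)).continuousOn
    (c := B.reApplyInnerSelf x ^ r - d * B.reApplyInnerSelf x) (d := d)
    (fun t ht => by linarith [hd t (spectrum_nonneg_of_nonneg hB ht)]) x
  rw [hx] at this
  linarith

lemma absOp_eq_cfc_sqrt (A : H →L[ℂ] H) : absOp A = cfc Real.sqrt (adjoint A * A) := by
  change CFC.sqrt (star A * A) = _
  rw [CFC.sqrt_eq_real_sqrt _ (star_mul_self_nonneg A), cfcₙ_eq_cfc]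
  rfl

lemma absOp_nonneg (A : H →L[ℂ] H) : 0 ≤ absOp A := CFC.sqrt_nonneg _

lemma mul_cfc_adjoint_mul_self (A : H →L[ℂ] H) {f : ℝ → ℝ} (hf : Continuous f) :
    A * cfc f (adjoint A * A) = cfc f (A * adjoint A) * A :=
  SemiconjBy.cfc_of_continuous (mul_assoc _ _ _).symm (.star_mul_self A) (.mul_star_self A) hf

/-- With `C = (|A| + ε)⁻¹` we have `⟪A x, y⟫ = ⟪C ((|A| + ε) x), A† y⟫`; Cauchy–Schwarz for `C`
applies, and intertwining gives `A C A† = (|A*| + ε)⁻¹ |A*|² ≤ |A*|`. -/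
lemma norm_inner_apply_sq_le_of_pos (A : H →L[ℂ] H) (x y : H) {ε : ℝ} (hε : 0 < ε) :
    ‖⟪A x, y⟫_ℂ‖ ^ 2 ≤
      ((absOp A).reApplyInnerSelf x + ε * ‖x‖ ^ 2) * (absOp (adjoint A)).reApplyInnerSelf y := by
  have ha : IsSelfAdjoint (adjoint A * A) := .star_mul_self A
  have hb : IsSelfAdjoint (A * adjoint A) := .mul_star_self A
  have hpos (t : ℝ) : 0 < √t + ε := by positivity
  have hcont : Continuous fun t => (√t + ε)⁻¹ := by
    fun_prop (disch := exact fun t => (hpos t).ne')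
  obtain ⟨C, hC⟩ : ∃ C, C = cfc (fun t => (√t + ε)⁻¹) (adjoint A * A) := ⟨_, rfl⟩
  obtain ⟨P, hP⟩ : ∃ P, P = absOp A + algebraMap ℝ _ ε := ⟨_, rfl⟩
  have hCP : C * P = 1 := by
    rw [hC, hP, absOp_eq_cfc_sqrt, ← cfc_add_const ε _ _ (by fun_prop) ha,
      ← cfc_mul _ _ _ hcont.continuousOn (by fun_prop)]
    exact (cfc_congr fun t _ => inv_mul_cancel₀ (hpos t).ne').trans (cfc_const_one ℝ _ ha)
  have hC0 : 0 ≤ C := hC ▸ cfc_nonneg fun t _ => (inv_pos.2 (hpos t)).le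
  have hACA : A * C * adjoint A ≤ absOp (adjoint A) := by
    rw [hC, mul_cfc_adjoint_mul_self A hcont, mul_assoc, absOp_eq_cfc_sqrt, adjoint_adjoint]
    nth_rewrite 2 [← cfc_id' ℝ (A * adjoint A) hb]
    rw [← cfc_mul _ _ _ hcont.continuousOn (by fun_prop)]
    refine cfc_mono (fun t ht => ?_) (by fun_prop) (by fun_prop)
    have ht0 : 0 ≤ t := spectrum_nonneg_of_nonneg (mul_star_self_nonneg A) ht
    rw [inv_mul_le_iff₀ (hpos t)]
    nlinarith [Real.mul_self_sqrt ht0, Real.sqrt_nonneg t]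
  calc ‖⟪A x, y⟫_ℂ‖ ^ 2 = ‖⟪C (P x), adjoint A y⟫_ℂ‖ ^ 2 := by
        rw [← mul_apply_eq_comp C P, hCP, one_apply_eq_self, adjoint_inner_right]
    _ ≤ C.reApplyInnerSelf (P x) * C.reApplyInnerSelf (adjoint A y) :=
        norm_inner_apply_sq_le_of_nonneg hC0 _ _
    _ = P.reApplyInnerSelf x * (A * C * adjoint A).reApplyInnerSelf y := by
        congr 1
        · rw [reApplyInnerSelf_apply, ← mul_apply_eq_comp C P, hCP, one_apply_eq_self,
            inner_re_symm]
          rfl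
        · rw [reApplyInnerSelf_apply, adjoint_inner_right]
          rfl
    _ ≤ _ := by
        rw [hP, reApplyInnerSelf_add, reApplyInnerSelf_algebraMap]
        exact mul_le_mul_of_nonneg_left (reApplyInnerSelf_mono hACA y)
          (add_nonneg (reApplyInnerSelf_nonneg (absOp_nonneg A) x) (by positivity))

/-- Kato's mixed Schwarz inequality. -/
theorem norm_inner_apply_sq_le_absOp_mul_absOp_adjoint (A : H →L[ℂ] H) (x y : H) :
    ‖⟪A x, y⟫_ℂ‖ ^ 2 ≤
      (absOp A).reApplyInnerSelf x * (absOp (adjoint A)).reApplyInnerSelf y := by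
  have hlim : Tendsto (fun ε : ℝ => ((absOp A).reApplyInnerSelf x + ε * ‖x‖ ^ 2) *
      (absOp (adjoint A)).reApplyInnerSelf y) (𝓝[>] 0)
      (𝓝 ((absOp A).reApplyInnerSelf x * (absOp (adjoint A)).reApplyInnerSelf y)) :=
    (Continuous.tendsto' (by fun_prop) 0 _ (by simp)).mono_left nhdsWithin_le_nhds
  exact ge_of_tendsto hlim (eventually_nhdsWithin_of_forall fun ε hε =>
    norm_inner_apply_sq_le_of_pos A x y hε)

theorem norm_inner_apply_self_rpow_le (A : H →L[ℂ] H) {r : ℝ} (hr : 1 ≤ r) {x : H}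
    (hx : ‖x‖ = 1) :
    ‖⟪A x, x⟫_ℂ‖ ^ r ≤ (1 / 2) * ‖cfc (fun t : ℝ => t ^ r) (absOp A)
      + cfc (fun t : ℝ => t ^ r) (absOp (adjoint A))‖ := by
  set p := (absOp A).reApplyInnerSelf x
  set q := (absOp (adjoint A)).reApplyInnerSelf x
  have hp : 0 ≤ p := reApplyInnerSelf_nonneg (absOp_nonneg A) x
  have hq : 0 ≤ q := reApplyInnerSelf_nonneg (absOp_nonneg _) x
  have hamgm : ‖⟪A x, x⟫_ℂ‖ ≤ (p + q) / 2 := by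
    refine (pow_le_pow_iff_left₀ (norm_nonneg _) (by positivity) two_ne_zero).mp ?_
    nlinarith [norm_inner_apply_sq_le_absOp_mul_absOp_adjoint A x x, sq_nonneg (p - q)]
  have hconv : ((p + q) / 2) ^ r ≤ (p ^ r + q ^ r) / 2 := by
    have := (convexOn_rpow hr).2 (Set.mem_Ici.2 hp) (Set.mem_Ici.2 hq)
      (by norm_num : (0 : ℝ) ≤ 1 / 2) (by norm_num : (0 : ℝ) ≤ 1 / 2) (by norm_num)
    rw [smul_eq_mul, smul_eq_mul, smul_eq_mul, smul_eq_mul] at this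
    rw [show (p + q) / 2 = 1 / 2 * p + 1 / 2 * q by ring]
    linarith
  calc ‖⟪A x, x⟫_ℂ‖ ^ r ≤ ((p + q) / 2) ^ r :=
        Real.rpow_le_rpow (norm_nonneg _) hamgm (by linarith)
    _ ≤ (p ^ r + q ^ r) / 2 := hconv
    _ ≤ (cfc (fun t : ℝ => t ^ r) (absOp A)
          + cfc (fun t : ℝ => t ^ r) (absOp (adjoint A))).reApplyInnerSelf x / 2 := by
        rw [reApplyInnerSelf_add]
        gcongr
        · exact rpow_reApplyInnerSelf_le (absOp_nonneg A) hr hx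
        · exact rpow_reApplyInnerSelf_le (absOp_nonneg _) hr hx
    _ ≤ (1 / 2) * ‖cfc (fun t : ℝ => t ^ r) (absOp A)
          + cfc (fun t : ℝ => t ^ r) (absOp (adjoint A))‖ := by
        rw [div_eq_inv_mul, one_div]
        gcongr
        exact (RCLike.re_le_norm _).trans (norm_inner_apply_self_le_opNorm _ hx)

section numRadius

variable {E : Type*} [NormedAddCommGroup E] [InnerProductSpace ℂ E]

lemma numRadius_nonneg (T : E →L[ℂ] E) : 0 ≤ numRadius T :=
  Real.sSup_nonneg (by rintro _ ⟨x, -, rfl⟩; positivity)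

lemma numRadius_le {T : E →L[ℂ] E} {c : ℝ} (hc : 0 ≤ c)
    (h : ∀ x, ‖x‖ = 1 → ‖⟪T x, x⟫_ℂ‖ ≤ c) : numRadius T ≤ c :=
  Real.sSup_le (by rintro _ ⟨x, hx, rfl⟩; exact h x hx) hc

lemma norm_inner_apply_self_le_numRadius (T : E →L[ℂ] E) {x : E} (hx : ‖x‖ = 1) :
    ‖⟪T x, x⟫_ℂ‖ ≤ numRadius T :=
  le_csSup ⟨‖T‖, by rintro _ ⟨y, hy, rfl⟩; exact norm_inner_apply_self_le_opNorm T hy⟩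
    ⟨x, hx, rfl⟩

lemma norm_inner_apply_self_le_numRadius_mul (T : E →L[ℂ] E) (x : E) :
    ‖⟪T x, x⟫_ℂ‖ ≤ numRadius T * ‖x‖ ^ 2 := by
  rcases eq_or_ne x 0 with rfl | hx
  · simp
  have hu := norm_inner_apply_self_le_numRadius T (norm_smul_inv_norm (𝕜 := ℂ) hx)
  rw [map_smul, inner_smul_left, inner_smul_right, norm_mul, norm_mul, RCLike.norm_conj] at hu
  simp only [Complex.coe_algebraMap, norm_inv, Complex.norm_real, norm_norm] at hu
  have hx' : 0 < ‖x‖ := norm_pos_iff.2 hx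
  calc ‖⟪T x, x⟫_ℂ‖ = ‖x‖ ^ 2 * (‖x‖⁻¹ * (‖x‖⁻¹ * ‖⟪T x, x⟫_ℂ‖)) := by field_simp
    _ ≤ ‖x‖ ^ 2 * numRadius T := by gcongr
    _ = numRadius T * ‖x‖ ^ 2 := mul_comm _ _

variable {F : Type*} [NormedAddCommGroup F] [InnerProductSpace ℂ F]

lemma inner_blockOp_diag_apply (A : E →L[ℂ] E) (D : F →L[ℂ] F)
    (x : WithLp 2 (E × F)) :
    ⟪blockOp A 0 0 D x, x⟫_ℂ = ⟪A x.fst, x.fst⟫_ℂ + ⟪D x.snd, x.snd⟫_ℂ := by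
  rw [WithLp.prod_inner_apply]
  simp [blockOp]

lemma numRadius_blockOp_diag_le (A : E →L[ℂ] E) (D : F →L[ℂ] F) :
    numRadius (blockOp A 0 0 D) ≤ max (numRadius A) (numRadius D) := by
  refine numRadius_le ((numRadius_nonneg A).trans (le_max_left _ _)) fun x hx => ?_
  calc ‖⟪blockOp A 0 0 D x, x⟫_ℂ‖
      ≤ ‖⟪A x.fst, x.fst⟫_ℂ‖ + ‖⟪D x.snd, x.snd⟫_ℂ‖ := by
        rw [inner_blockOp_diag_apply]
        exact norm_add_le _ _
    _ ≤ numRadius A * ‖x.fst‖ ^ 2 + numRadius D * ‖x.snd‖ ^ 2 :=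
        add_le_add (norm_inner_apply_self_le_numRadius_mul A _)
          (norm_inner_apply_self_le_numRadius_mul D _)
    _ ≤ max (numRadius A) (numRadius D) * (‖x.fst‖ ^ 2 + ‖x.snd‖ ^ 2) := by
        rw [mul_add]
        gcongr
        exacts [le_max_left _ _, le_max_right _ _]
    _ = max (numRadius A) (numRadius D) := by
        rw [← WithLp.prod_norm_sq_eq_of_L2, hx, one_pow, mul_one]

end numRadius

lemma numRadius_rpow_le (A : H →L[ℂ] H) {r : ℝ} (hr : 1 ≤ r) :
    numRadius A ^ r ≤ (1 / 2) * ‖cfc (fun t : ℝ => t ^ r) (absOp A)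
      + cfc (fun t : ℝ => t ^ r) (absOp (adjoint A))‖ := by
  have hr0 : 0 < r := by linarith
  rw [← Real.le_rpow_inv_iff_of_pos (numRadius_nonneg A) (by positivity) hr0]
  exact numRadius_le (by positivity) fun x hx =>
    (Real.le_rpow_inv_iff_of_pos (norm_nonneg _) (by positivity) hr0).2
      (norm_inner_apply_self_rpow_le A hr hx)

theorem numRadius_blockDiag_pow_le (A : H₁ →L[ℂ] H₁) (D : H₂ →L[ℂ] H₂)
    (r : ℝ) (hr : 1 ≤ r) :
    numRadius (blockOp A 0 0 D) ^ r ≤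
      (1 / 2) * max
        ‖cfc (fun t : ℝ => t ^ r) (absOp A)
          + cfc (fun t : ℝ => t ^ r) (absOp (ContinuousLinearMap.adjoint A))‖
        ‖cfc (fun t : ℝ => t ^ r) (absOp D)
          + cfc (fun t : ℝ => t ^ r) (absOp (ContinuousLinearMap.adjoint D))‖ := by
  calc numRadius (blockOp A 0 0 D) ^ r ≤ max (numRadius A) (numRadius D) ^ r :=
        Real.rpow_le_rpow (numRadius_nonneg _) (numRadius_blockOp_diag_le A D) (by linarith)
    _ = max (numRadius A ^ r) (numRadius D ^ r) :=
        Real.rpow_max (numRadius_nonneg A) (numRadius_nonneg D) (by linarith)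
    _ ≤ _ := by
        rw [mul_max_of_nonneg _ _ (by norm_num : (0 : ℝ) ≤ 1 / 2)]
        exact max_le_max (numRadius_rpow_le A hr) (numRadius_rpow_le D hr)
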